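/- arXiv:2109.03130 — 5 statements merged into one kernel-verified Lean document; each statement's English description precedes it below -/
import Mathlib

section
/- Let q ≥ 7 be a power of an odd prime and F = 𝔽_q. In the graph R, the number of vertices at graph distance exactly 3 from the line [0,1,0] is r₃([0,1,0]) = q³ − 4q² + 9q − 8. -/
/-- Vertices: points (left component) and lines (right component), each a triple over `F`. -/
abbrev Vtx (F : Type) := (F × F × F) ⊕ (F × F × F)

/-- Adjacency for the graph `Γ_F(p₁ℓ₁, g(p₁,p₂,ℓ₁))`: a point `(p₁,p₂,p₃)` and a line
`[ℓ₁,ℓ₂,ℓ₃]` are adjacent iff `p₂+ℓ₂ = p₁ℓ₁` and `p₃+ℓ₃ = g(p₁,p₂,ℓ₁)`. -/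
def gammaAdj (F : Type) [Field F] (g : F → F → F → F) : Vtx F → Vtx F → Prop
  | Sum.inl p, Sum.inr l => p.2.1 + l.2.1 = p.1 * l.1 ∧ p.2.2 + l.2.2 = g p.1 p.2.1 l.1
  | Sum.inr l, Sum.inl p => p.2.1 + l.2.1 = p.1 * l.1 ∧ p.2.2 + l.2.2 = g p.1 p.2.1 l.1
  | _, _ => False

/-- The bipartite graph `Γ_F(p₁ℓ₁, g(p₁,p₂,ℓ₁))`. -/
def Gamma (F : Type) [Field F] (g : F → F → F → F) : SimpleGraph (Vtx F) where
  Adj := gammaAdj F g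
  symm := by
    constructor
    intro v w h
    match v, w with
    | Sum.inl p, Sum.inr l => exact h
    | Sum.inr l, Sum.inl p => exact h
  loopless := by
    constructor
    intro v h
    match v with
    | Sum.inl p => exact h
    | Sum.inr l => exact h

/-- The graph `R = Γ_F(p₁ℓ₁, p₁p₂ℓ₁(p₁+p₂+p₁p₂))`. -/
def RGraph (F : Type) [Field F] : SimpleGraph (Vtx F) :=
  Gamma F (fun p1 p2 l1 => p1 * p2 * l1 * (p1 + p2 + p1 * p2))

/-! The neighbours of the line `[0,1,0]` are the points `(s,-1,0)`, whose neighbours are the lines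
`[t, st+1, st]`. For `t ≠ 0` the parameter `s` can be eliminated, so a point `(x₁,x₂,x₃)` is reached
by a path of length 3 through such a line iff `x₃ - x₂ - 1 = t·x₁(x₂+1)((x₁+1)x₂ - 1)`; the path
through `t = 0` only reaches neighbours, and bipartiteness excludes even distances. Hence the points
at distance 3 are those with `x₂ ≠ -1` and `x₃ = x₂ + 1` exactly when `x₁((x₁+1)x₂ - 1) = 0`: over
each of the `q(q-1)` pairs `(x₁,x₂)` this leaves `q-1` values of `x₃`, except on the `2q-4` zeros
of that polynomial, where it leaves one. -/

open Finset

namespace SimpleGraph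

variable {V : Type*} {G : SimpleGraph V} {u w : V}

theorem dist_eq_three_iff_of_odd (hodd : ∀ p : G.Walk u w, Odd p.length) :
    G.dist u w = 3 ↔ (∃ a b, G.Adj u a ∧ G.Adj a b ∧ G.Adj b w) ∧ ¬G.Adj u w := by
  constructor
  · intro hd
    obtain ⟨p, hp⟩ := exists_walk_of_dist_ne_zero (hd ▸ three_ne_zero)
    rw [hd] at hp
    refine ⟨⟨p.getVert 1, p.getVert 2, ?_, p.adj_getVert_succ (by omega), ?_⟩, ?_⟩
    · simpa using p.adj_getVert_succ (i := 0) (by omega)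
    · simpa [← hp] using p.adj_getVert_succ (i := 2) (by omega)
    · rw [← dist_eq_one_iff_adj, hd]
      decide
  · rintro ⟨⟨a, b, hua, hab, hbw⟩, hnadj⟩
    have hle : G.dist u w ≤ 3 := dist_le (.cons hua (.cons hab (.cons hbw .nil)))
    obtain ⟨p, hp⟩ :=
      (Walk.cons hua (.cons hab (.cons hbw .nil))).reachable.exists_walk_length_eq_dist
    obtain ⟨k, hk⟩ := hp ▸ hodd p
    have hne : G.dist u w ≠ 1 := mt dist_eq_one_iff_adj.mp hnadj
    omega

end SimpleGraph

theorem Finset.card_filter_and_iff_eq {α K : Type*} [Fintype α] [Fintype K] [DecidableEq K]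
    (Q P : α → Prop) [DecidablePred Q] [DecidablePred P] (c : α → K) :
    (#{y : α × K | Q y.1 ∧ (P y.1 ↔ y.2 = c y.1)} : ℤ) =
      (Fintype.card K - 1) * #{a | Q a} - (Fintype.card K - 2) * #{a | Q a ∧ P a} := by
  simp only [natCast_card_filter, Fintype.sum_prod_type, mul_sum, ← sum_sub_distrib]
  refine sum_congr rfl fun a _ => ?_
  have : Nonempty K := ⟨c a⟩
  by_cases hQ : Q a <;> by_cases hP : P a <;>
    simp [hQ, hP, sum_ite, filter_ne', Nat.cast_pred Fintype.card_pos]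

theorem Finset.card_filter_snd_ne {α K : Type*} [Fintype α] [Fintype K] [DecidableEq K] (a : K) :
    #{u : α × K | u.2 ≠ a} = Fintype.card α * (Fintype.card K - 1) := by
  rw [← card_univ (α := α), ← card_univ (α := K), ← card_erase_of_mem (mem_univ a),
    ← card_product]
  congr 1
  ext u
  simp

theorem FiniteField.two_ne_zero_of_odd_card {F : Type*} [Field F] [Fintype F]
    (h : Odd (Fintype.card F)) : (2 : F) ≠ 0 :=
  Ring.two_ne_zero fun h2 => by
    simpa [Nat.odd_iff.mp h] using FiniteField.even_card_iff_char_two.mp h2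

theorem exists_ne_zero_eq_mul_iff {G₀ : Type*} [GroupWithZero G₀] {a c : G₀} :
    (∃ t ≠ 0, c = t * a) ↔ (a = 0 ↔ c = 0) := by
  constructor
  · rintro ⟨t, ht, rfl⟩
    simp [ht]
  · intro h
    by_cases ha : a = 0
    · exact ⟨1, one_ne_zero, by simpa [ha] using h.mp ha⟩
    · exact ⟨c / a, div_ne_zero (mt h.mpr ha) ha, (div_mul_cancel₀ c ha).symm⟩

namespace RGraph

variable {F : Type} [Field F]

@[simp]
theorem adj_inr_inl (l p : F × F × F) :
    (RGraph F).Adj (.inr l) (.inl p) ↔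
      p.2.1 + l.2.1 = p.1 * l.1 ∧
        p.2.2 + l.2.2 = p.1 * p.2.1 * l.1 * (p.1 + p.2.1 + p.1 * p.2.1) :=
  .rfl

@[simp]
theorem adj_inl_inr (p l : F × F × F) :
    (RGraph F).Adj (.inl p) (.inr l) ↔
      p.2.1 + l.2.1 = p.1 * l.1 ∧
        p.2.2 + l.2.2 = p.1 * p.2.1 * l.1 * (p.1 + p.2.1 + p.1 * p.2.1) :=
  .rfl

@[simp]
theorem not_adj_inl_inl (p p' : F × F × F) : ¬(RGraph F).Adj (.inl p) (.inl p') := id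

@[simp]
theorem not_adj_inr_inr (l l' : F × F × F) : ¬(RGraph F).Adj (.inr l) (.inr l') := id

def sideColoring : (RGraph F).Coloring Bool :=
  SimpleGraph.Coloring.mk Sum.isLeft fun {v w} h => by
    cases v <;> cases w <;> simp_all

theorem even_length_walk_iff {v w : Vtx F} (p : (RGraph F).Walk v w) :
    Even p.length ↔ (v.isLeft ↔ w.isLeft) :=
  sideColoring.even_length_iff_congr p

theorem adj_line010_iff (x : F × F × F) :
    (RGraph F).Adj (.inr (0, 1, 0)) (.inl x) ↔ x.2.1 = -1 ∧ x.2.2 = 0 := by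
  simp [add_eq_zero_iff_eq_neg]

theorem exists_path3_line010_iff (x : F × F × F) :
    (∃ a b, (RGraph F).Adj (.inr (0, 1, 0)) a ∧ (RGraph F).Adj a b ∧
        (RGraph F).Adj b (.inl x)) ↔
      (x.2.1 = -1 ∧ x.2.2 = 0) ∨
        ∃ t ≠ 0, x.2.2 - x.2.1 - 1 = t * (x.1 * (x.2.1 + 1) * ((x.1 + 1) * x.2.1 - 1)) := by
  obtain ⟨x₁, x₂, x₃⟩ := x
  constructor
  · rintro ⟨(⟨s, s₂, s₃⟩ | _), (_ | ⟨t, l₂, l₃⟩), ha, hab, hb⟩ <;>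
      simp only [adj_inr_inl, adj_inl_inr, not_adj_inl_inl, not_adj_inr_inr] at ha hab hb
    obtain ⟨rfl, rfl⟩ : s₂ = -1 ∧ s₃ = 0 :=
      ⟨by linear_combination ha.1, by linear_combination ha.2⟩
    obtain ⟨hab₁, hab₂⟩ := hab
    obtain ⟨hb₁, hb₂⟩ := hb
    by_cases ht : t = 0
    · subst ht
      left
      constructor
      · linear_combination hb₁ - hab₁
      · linear_combination hb₂ - hab₂
    · right
      refine ⟨t, ht, ?_⟩
      linear_combination hb₂ - hb₁ - hab₂ + hab₁
  · rintro (hx | ⟨t, ht, hx⟩)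
    · have hadj := (adj_line010_iff (x₁, x₂, x₃)).mpr hx
      exact ⟨_, _, hadj, hadj.symm, hadj⟩
    · obtain ⟨s, hst⟩ : ∃ s, s * t = x₁ * t - x₂ - 1 := ⟨_, div_mul_cancel₀ _ ht⟩
      refine ⟨.inl (s, -1, 0), .inr (t, s * t + 1, s * t), ?_, ?_, ?_⟩ <;>
        simp only [adj_inr_inl, adj_inl_inr]
      · constructor <;> ring
      · constructor <;> ring
      · constructor
        · linear_combination hst
        · linear_combination hst + hx

theorem dist_line010_inl_eq_three_iff (x : F × F × F) :
    (RGraph F).dist (.inr (0, 1, 0)) (.inl x) = 3 ↔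
      x.2.1 ≠ -1 ∧ (x.1 * ((x.1 + 1) * x.2.1 - 1) = 0 ↔ x.2.2 = x.2.1 + 1) := by
  have hodd (p : (RGraph F).Walk (.inr (0, 1, 0)) (.inl x)) : Odd p.length := by
    simpa using (even_length_walk_iff p).not
  rw [SimpleGraph.dist_eq_three_iff_of_odd hodd, exists_path3_line010_iff, adj_line010_iff,
    exists_ne_zero_eq_mul_iff]
  obtain ⟨x₁, x₂, x₃⟩ := x
  by_cases hx₂ : x₂ = -1
  · simp [hx₂]
  · have hx₂' : x₂ + 1 ≠ 0 := fun h => hx₂ (eq_neg_of_add_eq_zero_left h)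
    simp [hx₂, hx₂', sub_sub, sub_eq_zero, mul_assoc]

theorem setOf_dist_line010_eq_three :
    {w : Vtx F | (RGraph F).dist (.inr (0, 1, 0)) w = 3} =
      Sum.inl '' {x | x.2.1 ≠ -1 ∧ (x.1 * ((x.1 + 1) * x.2.1 - 1) = 0 ↔ x.2.2 = x.2.1 + 1)} := by
  ext (x | l)
  · simp [dist_line010_inl_eq_three_iff]
  · simp only [Set.mem_ofPred_eq, Set.mem_image, reduceCtorEq, and_false, exists_false,
      iff_false]
    intro hd
    obtain ⟨p, hp⟩ := SimpleGraph.exists_walk_of_dist_ne_zero (hd ▸ three_ne_zero)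
    have := (even_length_walk_iff p).mpr Iff.rfl
    rw [hp, hd] at this
    exact Nat.not_even_iff_odd.mpr (by decide) this

section Counting

variable [Fintype F] [DecidableEq F]

theorem card_filter_mul_eq_zero (h2 : (2 : F) ≠ 0) :
    (#{u : F × F | u.2 ≠ -1 ∧ u.1 * ((u.1 + 1) * u.2 - 1) = 0} : ℤ) =
      2 * Fintype.card F - 4 := by
  have h01 : (0 : F) ≠ -1 := by simp
  have h02 : (0 : F) ≠ -2 := fun h => h2 (by linear_combination h)
  have h12 : (-1 : F) ≠ -2 := fun h => one_ne_zero (by linear_combination h)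
  set B := ({0, -1, -2}ᶜ : Finset F).image fun s => (s, (s + 1)⁻¹)
  have hsplit : ({u : F × F | u.2 ≠ -1 ∧ u.1 * ((u.1 + 1) * u.2 - 1) = 0} : Finset (F × F)) =
      {0} ×ˢ univ.erase (-1) ∪ B := by
    ext ⟨s, t⟩
    simp only [B, mem_filter, mem_univ, true_and, mem_union, mem_product, mem_singleton,
      mem_erase, and_true, mem_image, mem_compl, mem_insert, mul_eq_zero, not_or, Prod.mk.injEq]
    constructor
    · rintro ⟨ht, h⟩
      by_cases hs0 : s = 0
      · exact .inl ⟨hs0, ht⟩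
      have hst : (s + 1) * t = 1 := sub_eq_zero.mp (h.resolve_left hs0)
      have hs1 : s + 1 ≠ 0 := left_ne_zero_of_mul_eq_one hst
      refine .inr ⟨s, ⟨hs0, ?_, ?_⟩, rfl, (eq_inv_of_mul_eq_one_right hst).symm⟩
      · rintro rfl
        simp at hs1
      · rintro rfl
        exact ht (by linear_combination -hst)
    · rintro (⟨rfl, ht⟩ | ⟨s, ⟨-, hs1, hs2⟩, rfl, rfl⟩)
      · simp [ht]
      have hs1' : s + 1 ≠ 0 := fun h => hs1 (eq_neg_of_add_eq_zero_left h)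
      refine ⟨fun h => hs2 ?_, .inr (by simp [hs1'])⟩
      have h' : s + 1 = -1 := by simpa using inv_eq_iff_eq_inv.mp h
      linear_combination h'
  have hdisj : Disjoint ({0} ×ˢ univ.erase (-1)) B := by
    simp only [B, disjoint_left, mem_product, mem_singleton, mem_image]
    rintro _ ⟨h0, -⟩ ⟨s, hs, rfl⟩
    exact mem_compl.mp hs (by simp [← h0])
  have h3 : #({0, -1, -2} : Finset F) = 3 := by
    rw [card_insert_of_notMem (by simp [h01, h02]), card_pair h12]
  rw [hsplit, card_union_of_disjoint hdisj,
    card_image_of_injective _ fun s t h => congrArg Prod.fst h, card_compl, h3, card_product,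
    card_singleton, card_erase_of_mem (mem_univ _), card_univ]
  have : 3 ≤ Fintype.card F := by
    rw [← h3]; exact card_le_univ _
  push_cast [Nat.cast_sub this, Nat.cast_sub (by omega : 1 ≤ Fintype.card F)]
  ring

end Counting

end RGraph

theorem r3_line_010_general (q p e : ℕ) (hodd : Odd p) (hq : q = p ^ e)
    (F : Type) [Field F] [Fintype F] (hcard : Fintype.card F = q) :
    (Set.ncard {w : Vtx F | (RGraph F).dist (Sum.inr (0, 1, 0)) w = 3} : ℤ) =
      (q : ℤ) ^ 3 - 4 * (q : ℤ) ^ 2 + 9 * (q : ℤ) - 8 := by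
  classical
  have h2 : (2 : F) ≠ 0 := FiniteField.two_ne_zero_of_odd_card (hcard ▸ hq ▸ hodd.pow)
  have hcount : {x : F × F × F | x.2.1 ≠ -1 ∧
      (x.1 * ((x.1 + 1) * x.2.1 - 1) = 0 ↔ x.2.2 = x.2.1 + 1)}.ncard =
      #{y : (F × F) × F | y.1.2 ≠ -1 ∧
        (y.1.1 * ((y.1.1 + 1) * y.1.2 - 1) = 0 ↔ y.2 = y.1.2 + 1)} := by
    rw [← Set.ncard_image_of_injective _ (Equiv.prodAssoc F F F).symm.injective,
      Equiv.image_symm_eq_preimage, Set.ncard_eq_toFinset_card']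
    congr 1
    ext
    simp
  rw [RGraph.setOf_dist_line010_eq_three, Set.ncard_image_of_injective _ Sum.inl_injective,
    hcount, card_filter_and_iff_eq (fun u : F × F => u.2 ≠ -1)
      (fun u => u.1 * ((u.1 + 1) * u.2 - 1) = 0) (fun u => u.2 + 1),
    card_filter_snd_ne, RGraph.card_filter_mul_eq_zero h2, hcard]
  have : 1 ≤ q := hcard ▸ Fintype.card_pos
  push_cast [Nat.cast_sub this]
  ring

/-- Let `q ≥ 7` be a power of an odd prime and `F = 𝔽_q`. In the graph `R`, the number of
vertices at graph distance exactly 3 from the line `[0,1,0]` is `q³ − 4q² + 9q − 8`. -/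
theorem r3_line_010 (q p e : ℕ) (hp : p.Prime) (hodd : Odd p) (he : 1 ≤ e) (hq : q = p ^ e)
    (h7 : 7 ≤ q) (F : Type) [Field F] [Fintype F] (hcard : Fintype.card F = q) :
    (Set.ncard {w : Vtx F | (RGraph F).dist (Sum.inr (0, 1, 0)) w = 3} : ℤ) =
      (q : ℤ) ^ 3 - 4 * (q : ℤ) ^ 2 + 9 * (q : ℤ) - 8 :=
  r3_line_010_general q p e hodd hq F hcard
end

section
/- Let q ≥ 17 be a power of an odd prime with q ≡ 1 (mod 3), F = 𝔽_q, and let c₂, c₁, c₋₁ ∈ F. Then the function J : F → F defined by J(x) = x³ + c₂x² + c₁x + c₋₁x^{q−2} is not a bijection of F (i.e., X³ + c₂X² + c₁X + c₋₁X^{q−2} is not a permutation polynomial of F). -/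
open Finset Polynomial

/-- Let `q ≥ 17` be a power of an odd prime with `q ≡ 1 (mod 3)`, `F = 𝔽_q`, and
`c₂, c₁, c₋₁ ∈ F`. Then the function `J(x) = x³ + c₂x² + c₁x + c₋₁x^(q−2)` is not a
bijection of `F`. -/
theorem J_not_bijective (q p e : ℕ) (hp : p.Prime) (hodd : Odd p) (he : 1 ≤ e)
    (hq : q = p ^ e) (h17 : 17 ≤ q) (hmod : q % 3 = 1)
    (F : Type) [Field F] [Fintype F] (hcard : Fintype.card F = q) (c2 c1 cm1 : F) :
    ¬ Function.Bijective (fun x : F => x ^ 3 + c2 * x ^ 2 + c1 * x + cm1 * x ^ (q - 2)) := by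
  classical
  intro hbij
  -- Basic facts about sums of powers over F
  have hq0 : (q : F) = 0 := by rw [← hcard]; exact FiniteField.cast_card_eq_zero F
  have hZ : ∀ n : ℕ, n < q - 1 → ∑ x : F, x ^ n = 0 := by
    intro n hn
    apply FiniteField.sum_pow_lt_card_sub_one
    rwa [hcard]
  have hW : ∑ x : F, x ^ (q - 1) = -1 := by
    have h0 : (0:F) ^ (q-1) = 0 := zero_pow (by omega)
    rw [← Finset.sum_erase_add Finset.univ _ (Finset.mem_univ (0:F)), h0, add_zero]
    have hone : ∀ x ∈ Finset.univ.erase (0:F), x ^ (q-1) = (1:F) := by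
      intro x hx
      have hx0 : x ≠ 0 := Finset.ne_of_mem_erase hx
      have := FiniteField.pow_card_sub_one_eq_one x hx0
      rwa [hcard] at this
    rw [Finset.sum_congr rfl hone, Finset.sum_const,
      Finset.card_erase_of_mem (Finset.mem_univ 0), Finset.card_univ, hcard,
      nsmul_eq_mul, mul_one, Nat.cast_sub (by omega : 1 ≤ q), hq0, Nat.cast_one, zero_sub]
  have h2ne : (2 : F) ≠ 0 := by
    intro h2
    have hqodd : Odd q := hq ▸ hodd.pow
    obtain ⟨k, hk⟩ := hqodd
    have hcast : ((2 * k + 1 : ℕ) : F) = 0 := by rw [← hk]; exact_mod_cast hq0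
    push_cast at hcast
    rw [h2, zero_mul, zero_add] at hcast
    exact one_ne_zero hcast
  -- If J is bijective, all power sums of J vanish
  have hS : ∀ s : ℕ, s < q - 1 →
      ∑ x : F, (x ^ 3 + c2 * x ^ 2 + c1 * x + cm1 * x ^ (q - 2)) ^ s = 0 := by
    intro s hs
    have := Fintype.sum_bijective _ hbij
      (fun x : F => (x ^ 3 + c2 * x ^ 2 + c1 * x + cm1 * x ^ (q - 2)) ^ s)
      (fun y : F => y ^ s) (fun x => rfl)
    rw [this]
    exact hZ s hs
  -- pointwise facts for nonzero x
  have hpow : ∀ x : F, x ≠ 0 → x ^ (q - 1) = 1 := by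
    intro x hx
    have := FiniteField.pow_card_sub_one_eq_one x hx
    rwa [hcard] at this
  -- the second power sum
  have key2 : ∀ x : F, (x ^ 3 + c2 * x ^ 2 + c1 * x + cm1 * x ^ (q - 2)) ^ 2 =
      x^6 + 2*c2*x^5 + (c2^2+2*c1)*x^4 + 2*(c1*c2)*x^3 + (c1^2+2*cm1)*x^2
        + 2*(c2*cm1)*x^1 + 2*(c1*cm1)*x^(q-1) + cm1^2*x^(q-3) := by
    intro x
    rcases eq_or_ne x 0 with rfl | hx
    · have h1 : q - 2 ≠ 0 := by omega
      have h2 : q - 1 ≠ 0 := by omega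
      have h3 : q - 3 ≠ 0 := by omega
      simp [zero_pow, h1, h2, h3]
    · have e1 : x ^ (q-1) = 1 := hpow x hx
      have e2 : x ^ (q-2) = x⁻¹ := by
        apply eq_inv_of_mul_eq_one_left
        rw [← pow_succ, (by omega : q - 2 + 1 = q - 1), e1]
      have e3 : x ^ (q-3) = (x^2)⁻¹ := by
        apply eq_inv_of_mul_eq_one_left
        rw [← pow_add, (by omega : q - 3 + 2 = q - 1), e1]
      rw [e1, e2, e3]
      field_simp
      ring
  have S2 : c1 * cm1 = 0 := by
    have h := hS 2 (by omega)
    rw [Finset.sum_congr rfl (fun x _ => key2 x)] at h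
    simp only [Finset.sum_add_distrib, ← Finset.mul_sum] at h
    rw [hZ 6 (by omega), hZ 5 (by omega), hZ 4 (by omega), hZ 3 (by omega),
      hZ 2 (by omega), hZ 1 (by omega), hZ (q-3) (by omega), hW] at h
    have h' : (2:F) * (c1 * cm1) = 0 := by linear_combination -h
    rcases mul_eq_zero.mp h' with h'' | h''
    · exact absurd h'' h2ne
    · exact h''
  rcases eq_or_ne cm1 0 with hcm | hcm
  · -- cubic case : cm1 = 0, degree 3 divides q - 1
    subst hcm
    set s : ℕ := (q - 1) / 3 with hsdef
    have hs3 : 3 * s = q - 1 := by omega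
    have hs1 : 0 < s := by omega
    set P : F[X] := X^2 + C c2 * X + C c1 with hPdef
    have hP : P.Monic := by
      have hE : P = X^2 + (C c2 * X + C c1) := by rw [hPdef]; ring
      rw [hE]
      exact monic_X_pow_add (lt_of_le_of_lt degree_linear_le (by norm_num))
    have hPdeg : P.natDegree = 2 := by
      have hE : P = C 1 * X^2 + C c2 * X + C c1 := by rw [hPdef]; simp
      rw [hE]
      exact natDegree_quadratic one_ne_zero
    have hQdeg : (P ^ s).natDegree = s * 2 := by
      rw [natDegree_pow, hPdeg]
    have hcoeff : (P ^ s).coeff (s * 2) = 1 := by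
      have := (hP.pow s).coeff_natDegree
      rwa [hQdeg] at this
    have step1 : ∀ x : F, (x ^ 3 + c2 * x ^ 2 + c1 * x + (0:F) * x ^ (q - 2)) ^ s =
        ∑ k ∈ Finset.range (s*2+1), (P ^ s).coeff k * x ^ (k + s) := by
      intro x
      have h1 : x ^ 3 + c2 * x ^ 2 + c1 * x + (0:F) * x ^ (q - 2) = x * P.eval x := by
        rw [hPdef]; simp; ring
      rw [h1, mul_pow, ← eval_pow, eval_eq_sum_range, hQdeg, Finset.mul_sum]
      apply Finset.sum_congr rfl
      intro k _
      rw [pow_add]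
      ring
    have hfin := hS s (by omega)
    rw [Finset.sum_congr rfl (fun x _ => step1 x), Finset.sum_comm,
      Finset.sum_range_succ] at hfin
    have hzero : ∀ k ∈ Finset.range (s*2), ∑ x : F, (P ^ s).coeff k * x ^ (k + s) = 0 := by
      intro k hk
      rw [Finset.mem_range] at hk
      rw [← Finset.mul_sum, hZ (k+s) (by omega), mul_zero]
    rw [Finset.sum_eq_zero hzero, zero_add, ← Finset.mul_sum, hcoeff, one_mul,
      (by omega : s*2 + s = q - 1), hW] at hfin
    exact one_ne_zero (neg_eq_zero.mp hfin)
  · -- cm1 ≠ 0, hence c1 = 0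
    have hc1 : c1 = 0 := by
      rcases mul_eq_zero.mp S2 with h | h
      · exact h
      · exact absurd h hcm
    subst hc1
    -- fourth power sum
    have key4 : ∀ x : F, (x ^ 3 + c2 * x ^ 2 + (0:F) * x + cm1 * x ^ (q - 2)) ^ 4 =
        x^12 + 4*c2*x^11 + 6*(c2^2)*x^10 + 4*(c2^3)*x^9 + (c2^4+4*cm1)*x^8
          + 12*(c2*cm1)*x^7 + 12*(c2^2*cm1)*x^6 + 4*(c2^3*cm1)*x^5 + 6*(cm1^2)*x^4
          + 12*(c2*cm1^2)*x^3 + 6*(c2^2*cm1^2)*x^2 + 4*(c2*cm1^3)*x^(q-2)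
          + cm1^4*x^(q-5) + 4*(cm1^3)*x^(q-1) := by
      intro x
      rcases eq_or_ne x 0 with rfl | hx
      · have h1 : q - 2 ≠ 0 := by omega
        have h2 : q - 1 ≠ 0 := by omega
        have h5 : q - 5 ≠ 0 := by omega
        simp [zero_pow, h1, h2, h5]
      · have e1 : x ^ (q-1) = 1 := hpow x hx
        have e2 : x ^ (q-2) = x⁻¹ := by
          apply eq_inv_of_mul_eq_one_left
          rw [← pow_succ, (by omega : q - 2 + 1 = q - 1), e1]
        have e5 : x ^ (q-5) = (x^4)⁻¹ := by
          apply eq_inv_of_mul_eq_one_left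
          rw [← pow_add, (by omega : q - 5 + 4 = q - 1), e1]
        rw [e1, e2, e5]
        field_simp
        ring
    have h := hS 4 (by omega)
    rw [Finset.sum_congr rfl (fun x _ => key4 x)] at h
    simp only [Finset.sum_add_distrib, ← Finset.mul_sum] at h
    rw [hZ 12 (by omega), hZ 11 (by omega), hZ 10 (by omega), hZ 9 (by omega),
      hZ 8 (by omega), hZ 7 (by omega), hZ 6 (by omega), hZ 5 (by omega),
      hZ 4 (by omega), hZ 3 (by omega), hZ 2 (by omega), hZ (q-2) (by omega),
      hZ (q-5) (by omega), hW] at h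
    have h4 : (2:F) * (2 * cm1^3) = 0 := by linear_combination -h
    rcases mul_eq_zero.mp h4 with h' | h'
    · exact absurd h' h2ne
    · rcases mul_eq_zero.mp h' with h'' | h''
      · exact absurd h'' h2ne
      · have hcm0 : cm1 = 0 := pow_eq_zero_iff (n := 3) (by norm_num) |>.mp h''
        exact hcm hcm0
end

section
/- Let q ≥ 17 be a power of an odd prime with q ≡ 1 (mod 3), F = 𝔽_q, and let c₂, c₁, c₋₁ ∈ F. Let J : F → F be defined by J(x) = x³ + c₂x² + c₁x + c₋₁x^{q−2}. Then the image J(F) has at most q − 2 elements; moreover, if 0 does not belong to J(F \ {0}), then the image J(F \ {0}) of the nonzero elements has at most q − 3 elements. -/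
/-!
For `x ≠ 0` we have `J(x) = P(x) / x` with `P = X⁴ + c₂X³ + c₁X² + c₋₁`, so for `0 < k` with
`3k < q - 1` the power sum `∑ₓ J(x)^k` is the sum over `F` of the polynomial `P^k X^(q-1-k)`,
whose degree is below `2(q - 1)`; hence it equals `-[Xᵏ] Pᵏ`.

For `k = 1` this gives `∑ J = 0 = ∑ x`. If `J` missed exactly one value `b`, it would take
exactly one value `a` twice, and comparing the two sums gives `a = b`, which is absurd.

If `J` were a permutation, every power sum `∑ J^k` with `0 < k < q - 1` would vanish. The
cases `k = 2` and `k = 4` give `2c₁c₋₁ = 0` and `4c₋₁³ + 6c₁²c₋₁² = 0`, so `c₋₁ = 0` in odd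
characteristic. Then `J` is a cubic polynomial and `J^((q-1)/3)` is a monic polynomial of
degree `q - 1`, whose sum over `F` is `-1`.
-/

open Finset Polynomial

theorem Finset.card_image_ne_card_sub_one_of_sum_eq {α : Type*} [Fintype α] [DecidableEq α]
    [AddCommGroup α] {f : α → α} (hf : ∑ x, f x = ∑ x, x) :
    #(univ.image f) ≠ Fintype.card α - 1 := by
  intro hcard
  have hpos : 0 < Fintype.card α := Fintype.card_pos
  obtain ⟨b, hb⟩ : ∃ b, b ∉ univ.image f := by
    by_contra! h
    rw [eq_univ_of_forall h, card_univ] at hcard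
    omega
  have himage : univ.image f = univ.erase b :=
    eq_of_subset_of_card_le (fun y hy => mem_erase.2 ⟨ne_of_mem_of_not_mem hy hb, mem_univ y⟩)
      (by rw [card_erase_of_mem (mem_univ b), card_univ, hcard])
  have hnotinj : ¬ Function.Injective f := fun hinj => by
    rw [card_image_of_injective _ hinj, card_univ] at hcard
    omega
  simp only [Function.Injective, not_forall] at hnotinj
  obtain ⟨x₁, x₂, hfx, hne⟩ := hnotinj
  have himage' : (univ.erase x₂).image f = univ.image f := by
    ext y
    simp only [mem_image, mem_erase, mem_univ, and_true, true_and]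
    constructor
    · rintro ⟨x, -, rfl⟩
      exact ⟨x, rfl⟩
    · rintro ⟨x, rfl⟩
      by_cases hx : x = x₂
      · exact ⟨x₁, hne, hx ▸ hfx⟩
      · exact ⟨x, hx, rfl⟩
  have hinj : Set.InjOn f (univ.erase x₂) := injOn_of_card_image_eq <| by
    rw [himage', hcard, card_erase_of_mem (mem_univ x₂), card_univ]
  have hsum : ∑ x ∈ univ.erase x₂, f x = ∑ y ∈ univ.erase b, y := by
    rw [← himage, ← himage', sum_image hinj]
  have hfx₂ : f x₂ = b := by
    rw [← add_sum_erase _ _ (mem_univ x₂), ← add_sum_erase _ _ (mem_univ b), hsum] at hf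
    exact add_right_cancel hf
  exact hb (hfx₂ ▸ mem_image_of_mem f (mem_univ x₂))

namespace FiniteField

variable {K : Type*} [Field K] [Fintype K]

local notation "q" => Fintype.card K

theorem pow_card_sub_two (hq : 2 < q) (x : K) : x ^ (q - 2) = x⁻¹ := by
  rcases eq_or_ne x 0 with rfl | hx
  · simp [zero_pow (by omega : q - 2 ≠ 0)]
  · apply eq_inv_of_mul_eq_one_left
    rw [← pow_succ, show q - 2 + 1 = q - 1 by omega, pow_card_sub_one_eq_one x hx]

theorem sum_pow_card_sub_one : ∑ x : K, x ^ (q - 1) = -1 := by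
  classical
  have hq : 1 < q := Fintype.one_lt_card
  calc ∑ x : K, x ^ (q - 1) = ∑ x : K, (1 - if x = 0 then 1 else 0) := by
        refine sum_congr rfl fun x _ => ?_
        rcases eq_or_ne x 0 with rfl | hx
        · simp [zero_pow (by omega : q - 1 ≠ 0)]
        · simp [hx, pow_card_sub_one_eq_one x hx]
    _ = -1 := by simp [sum_sub_distrib]

theorem sum_pow_of_lt_two_mul {n : ℕ} (hn : n < 2 * (q - 1)) :
    ∑ x : K, x ^ n = if n = q - 1 then -1 else 0 := by
  split_ifs with h
  · rw [h, sum_pow_card_sub_one]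
  rcases Nat.lt_or_gt_of_ne h with hlt | hgt
  · exact sum_pow_lt_card_sub_one K n hlt
  · have hpow : ∀ x : K, x ^ n = x ^ (n - q + 1) := fun x =>
      calc x ^ n = x ^ (n - q) * x ^ q := by rw [← pow_add, Nat.sub_add_cancel (by omega)]
        _ = x ^ (n - q + 1) := by rw [pow_card, pow_succ]
    simp_rw [hpow]
    exact sum_pow_lt_card_sub_one K _ (by omega)

theorem sum_eval_eq_neg_coeff {h : K[X]} (hh : h.natDegree < 2 * (q - 1)) :
    ∑ x : K, h.eval x = -h.coeff (q - 1) := by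
  have hq : 1 < q := Fintype.one_lt_card
  calc ∑ x : K, h.eval x = ∑ i ∈ range (2 * (q - 1)), h.coeff i * ∑ x : K, x ^ i := by
        simp_rw [eval_eq_sum_range' hh, mul_sum]
        exact sum_comm
    _ = ∑ i ∈ range (2 * (q - 1)), h.coeff i * if i = q - 1 then -1 else 0 :=
        sum_congr rfl fun i hi => by rw [sum_pow_of_lt_two_mul (mem_range.mp hi)]
    _ = -h.coeff (q - 1) := by simp [mul_ite]; omega

end FiniteField

section LaurentCubic

variable {K : Type*} [Field K] (c2 c1 cm1 : K)

-- With `0⁻¹ = 0`, this equals `x³ + c2 x² + c1 x + cm1 x^(q-2)` at every `x`, including `0`.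
def laurentCubic (x : K) : K := x ^ 3 + c2 * x ^ 2 + c1 * x + cm1 * x⁻¹

noncomputable def laurentCubicNumerator : K[X] := X ^ 4 + C c2 * X ^ 3 + C c1 * X ^ 2 + C cm1

@[simp]
theorem laurentCubic_zero : laurentCubic c2 c1 cm1 0 = 0 := by
  simp [laurentCubic]

theorem laurentCubic_mul_eq_eval {x : K} (hx : x ≠ 0) :
    laurentCubic c2 c1 cm1 x * x = (laurentCubicNumerator c2 c1 cm1).eval x := by
  simp only [laurentCubic, laurentCubicNumerator, eval_add, eval_mul, eval_pow, eval_C, eval_X]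
  field_simp

theorem laurentCubic_eq_eval_cubic (x : K) :
    laurentCubic c2 c1 0 x = (X ^ 3 + C c2 * X ^ 2 + C c1 * X).eval x := by
  simp [laurentCubic]

theorem laurentCubicNumerator_natDegree_le : (laurentCubicNumerator c2 c1 cm1).natDegree ≤ 4 := by
  unfold laurentCubicNumerator
  compute_degree

theorem laurentCubicNumerator_coeff_one : (laurentCubicNumerator c2 c1 cm1).coeff 1 = 0 := by
  simp [laurentCubicNumerator]

theorem laurentCubicNumerator_sq_coeff_two :
    (laurentCubicNumerator c2 c1 cm1 ^ 2).coeff 2 = 2 * c1 * cm1 := by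
  simp [laurentCubicNumerator, sq, coeff_mul, Nat.antidiagonal_succ, coeff_X_pow, coeff_C]
  ring

theorem laurentCubicNumerator_pow_four_coeff_four :
    (laurentCubicNumerator c2 c1 cm1 ^ 4).coeff 4 = 4 * cm1 ^ 3 + 6 * c1 ^ 2 * cm1 ^ 2 := by
  simp [laurentCubicNumerator, pow_succ, coeff_mul, Nat.antidiagonal_succ, coeff_X, coeff_C]
  ring

variable [Fintype K]

local notation "q" => Fintype.card K

theorem laurentCubic_pow_eq_eval {k : ℕ} (hk : 0 < k) (hkq : k < q - 1) (x : K) :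
    laurentCubic c2 c1 cm1 x ^ k =
      (laurentCubicNumerator c2 c1 cm1 ^ k * X ^ (q - 1 - k)).eval x := by
  rcases eq_or_ne x 0 with rfl | hx
  · simp [zero_pow hk.ne', zero_pow (by omega : q - 1 - k ≠ 0)]
  · rw [eval_mul, eval_pow, eval_pow, eval_X, ← laurentCubic_mul_eq_eval c2 c1 cm1 hx, mul_pow,
      mul_assoc, ← pow_add, Nat.add_sub_cancel' hkq.le, FiniteField.pow_card_sub_one_eq_one x hx,
      mul_one]

theorem sum_laurentCubic_pow {k : ℕ} (hk : 0 < k) (hkq : 3 * k < q - 1) :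
    ∑ x : K, laurentCubic c2 c1 cm1 x ^ k = -(laurentCubicNumerator c2 c1 cm1 ^ k).coeff k := by
  have hdeg : (laurentCubicNumerator c2 c1 cm1 ^ k * X ^ (q - 1 - k)).natDegree < 2 * (q - 1) :=
    calc _ ≤ (laurentCubicNumerator c2 c1 cm1 ^ k).natDegree + (q - 1 - k) :=
          natDegree_mul_le.trans (by rw [natDegree_X_pow])
      _ ≤ k * 4 + (q - 1 - k) := by
          gcongr
          exact natDegree_pow_le_of_le k (laurentCubicNumerator_natDegree_le c2 c1 cm1)
      _ < 2 * (q - 1) := by omega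
  simp_rw [laurentCubic_pow_eq_eval c2 c1 cm1 hk (by omega : k < q - 1)]
  rw [FiniteField.sum_eval_eq_neg_coeff hdeg, ← coeff_mul_X_pow _ (q - 1 - k) k,
    Nat.add_sub_cancel' (by omega : k ≤ q - 1)]

theorem sum_laurentCubic (hq : 4 < q) : ∑ x : K, laurentCubic c2 c1 cm1 x = 0 := by
  simpa [laurentCubicNumerator_coeff_one] using
    sum_laurentCubic_pow c2 c1 cm1 one_pos (by omega)

theorem sum_laurentCubic_pow_card_sub_one_div_three (h3 : 3 ∣ q - 1) :
    ∑ x : K, laurentCubic c2 c1 0 x ^ ((q - 1) / 3) = -1 := by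
  have hq : 1 < q := Fintype.one_lt_card
  have hmonic : (X ^ 3 + C c2 * X ^ 2 + C c1 * X : K[X]).Monic := by monicity!
  have hdeg : (X ^ 3 + C c2 * X ^ 2 + C c1 * X : K[X]).natDegree = 3 := by compute_degree!
  have hdeg_pow : ((X ^ 3 + C c2 * X ^ 2 + C c1 * X : K[X]) ^ ((q - 1) / 3)).natDegree = q - 1 := by
    rw [natDegree_pow, hdeg]
    omega
  simp_rw [laurentCubic_eq_eval_cubic, ← eval_pow]
  have hcoeff := (hmonic.pow ((q - 1) / 3)).coeff_natDegree
  rw [hdeg_pow] at hcoeff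
  rw [FiniteField.sum_eval_eq_neg_coeff (by omega), hcoeff]

theorem laurentCubic_not_bijective (h2 : (2 : K) ≠ 0) (h3 : 3 ∣ q - 1) (hq : 13 < q) :
    ¬ Function.Bijective (laurentCubic c2 c1 cm1) := by
  intro hbij
  have hsum : ∀ k < q - 1, ∑ x : K, laurentCubic c2 c1 cm1 x ^ k = 0 := fun k hk => by
    rw [hbij.sum_comp (· ^ k)]
    exact FiniteField.sum_pow_lt_card_sub_one K k hk
  have hsq := sum_laurentCubic_pow c2 c1 cm1 two_pos (by omega)
  rw [hsum 2 (by omega), laurentCubicNumerator_sq_coeff_two] at hsq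
  have hfourth := sum_laurentCubic_pow c2 c1 cm1 four_pos (by omega)
  rw [hsum 4 (by omega), laurentCubicNumerator_pow_four_coeff_four] at hfourth
  have hc : c1 * cm1 = 0 := by
    have : 2 * (c1 * cm1) = 0 := by linear_combination hsq
    exact (mul_eq_zero.mp this).resolve_left h2
  have hcm1 : cm1 = 0 := by
    have : (2 * 2) * cm1 ^ 3 = 0 := by linear_combination hfourth - 6 * c1 * cm1 * hc
    exact pow_eq_zero_iff three_ne_zero |>.mp
      ((mul_eq_zero.mp this).resolve_left (mul_ne_zero h2 h2))
  subst hcm1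
  have hK := hsum ((q - 1) / 3) (by omega)
  rw [sum_laurentCubic_pow_card_sub_one_div_three c2 c1 h3] at hK
  exact one_ne_zero (neg_eq_zero.mp hK)

theorem ncard_range_laurentCubic_le (h2 : (2 : K) ≠ 0) (h3 : 3 ∣ q - 1) (hq : 13 < q) :
    (Set.range (laurentCubic c2 c1 cm1)).ncard ≤ q - 2 := by
  classical
  rw [← Set.image_univ, ← coe_univ, ← coe_image, Set.ncard_coe_finset]
  have hle := card_le_univ (univ.image (laurentCubic c2 c1 cm1))
  have hne_sub_one := card_image_ne_card_sub_one_of_sum_eq (f := laurentCubic c2 c1 cm1) <| by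
    rw [sum_laurentCubic c2 c1 cm1 (by omega)]
    simpa using (FiniteField.sum_pow_lt_card_sub_one K 1 (by omega)).symm
  have hne_card : #(univ.image (laurentCubic c2 c1 cm1)) ≠ q := fun h => by
    have hinj : Set.InjOn (laurentCubic c2 c1 cm1) ↑(univ : Finset K) :=
      card_image_iff.mp (h.trans card_univ.symm)
    rw [coe_univ, Set.injOn_univ] at hinj
    exact laurentCubic_not_bijective c2 c1 cm1 h2 h3 hq (Finite.injective_iff_bijective.mp hinj)
  omega

end LaurentCubic

theorem J_range_small_general (q p e : ℕ) (hodd : Odd p)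
    (hq : q = p ^ e) (h17 : 17 ≤ q) (hmod : q % 3 = 1)
    (F : Type) [Field F] [Fintype F] (hcard : Fintype.card F = q) (c2 c1 cm1 : F)
    (J : F → F) (hJ : ∀ x, J x = x ^ 3 + c2 * x ^ 2 + c1 * x + cm1 * x ^ (q - 2)) :
    Set.ncard (Set.range J) ≤ q - 2 ∧
      ((0 : F) ∉ J '' {x : F | x ≠ 0} → Set.ncard (J '' {x : F | x ≠ 0}) ≤ q - 3) := by
  subst hcard
  obtain rfl : J = laurentCubic c2 c1 cm1 :=
    funext fun x => by rw [hJ, FiniteField.pow_card_sub_two (by omega)]; rfl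
  have h2 : (2 : F) ≠ 0 := Ring.two_ne_zero fun hchar => by
    have := FiniteField.even_card_of_char_two hchar
    have := Nat.odd_iff.mp (hq ▸ hodd.pow)
    omega
  have hrange := ncard_range_laurentCubic_le c2 c1 cm1 h2 (by omega) (by omega)
  refine ⟨hrange, fun h0 => ?_⟩
  have hsub : insert 0 (laurentCubic c2 c1 cm1 '' {x | x ≠ 0}) ⊆
      Set.range (laurentCubic c2 c1 cm1) :=
    Set.insert_subset ⟨0, laurentCubic_zero c2 c1 cm1⟩ (Set.image_subset_range _ _)
  have := Set.ncard_le_ncard hsub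
  rw [Set.ncard_insert_of_notMem h0] at this
  omega

/-- Let `q ≥ 17` be a power of an odd prime with `q ≡ 1 (mod 3)`, `F = 𝔽_q`, and
`c₂, c₁, c₋₁ ∈ F`. Let `J(x) = x³ + c₂x² + c₁x + c₋₁x^(q−2)`. Then the image `J(F)` has at
most `q − 2` elements; moreover, if `0 ∉ J(F \ {0})`, then `J(F \ {0})` has at most `q − 3`
elements. -/
theorem J_range_small (q p e : ℕ) (hp : p.Prime) (hodd : Odd p) (he : 1 ≤ e)
    (hq : q = p ^ e) (h17 : 17 ≤ q) (hmod : q % 3 = 1)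
    (F : Type) [Field F] [Fintype F] (hcard : Fintype.card F = q) (c2 c1 cm1 : F)
    (J : F → F) (hJ : ∀ x, J x = x ^ 3 + c2 * x ^ 2 + c1 * x + cm1 * x ^ (q - 2)) :
    Set.ncard (Set.range J) ≤ q - 2 ∧
      ((0 : F) ∉ J '' {x : F | x ≠ 0} → Set.ncard (J '' {x : F | x ≠ 0}) ≤ q - 3) :=
  J_range_small_general q p e hodd hq h17 hmod F hcard c2 c1 cm1 J hJ
end

section
/- Let q be a power of an odd prime with q ≡ 1 (mod 3) and F = 𝔽_q. For all b, c, r, s ∈ F with b ≠ c, the points (0, b, r) and (0, c, s) are at graph distance exactly 4 in the graph R. -/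
/-!
Every neighbour of a point `(0,b,r)` is a line with `ℓ₂ = -b`, so for `b ≠ c` the two points
have no common neighbour; as the graph is bipartite their distance is at least 4. Conversely a
point `(x,y,z)` with `x ≠ 0` is joined to both by paths of length 2, and the third coordinates
match up exactly when `y(x+y+xy) = (r-s)/(b-c)`. This equation is linear in `x` once `y` is
fixed, and `|F| > 4` leaves a `y ∉ {0,-1}` with `y² ≠ (r-s)/(b-c)`, for which it has a solution
`x ≠ 0`.
-/

namespace Gamma

variable {F : Type} [Field F] {g : F → F → F → F}

def bicoloring : (Gamma F g).Coloring Bool :=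
  SimpleGraph.Coloring.mk Sum.isLeft <| by
    rintro (p | l) (p' | l') h
    exacts [h.elim, by simp, by simp, h.elim]

theorem even_length_walk_inl_inl {p p' : F × F × F} (w : (Gamma F g).Walk (.inl p) (.inl p')) :
    Even w.length :=
  (bicoloring.even_length_iff_congr w).mpr Iff.rfl

theorem eq_of_adj_of_adj {b c r s : F} {v : Vtx F} (h₁ : (Gamma F g).Adj (.inl (0, b, r)) v)
    (h₂ : (Gamma F g).Adj v (.inl (0, c, s))) : b = c := by
  rcases v with p | l
  · exact h₁.elim
  · linear_combination h₁.1 - h₂.1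

theorem four_le_length_walk {b c r s : F} (hbc : b ≠ c)
    (w : (Gamma F g).Walk (.inl (0, b, r)) (.inl (0, c, s))) : 4 ≤ w.length := by
  obtain ⟨k, hk⟩ := even_length_walk_inl_inl w
  have hne : w.length ≠ 0 := fun h =>
    hbc (congrArg (·.2.1) (Sum.inl_injective (w.eq_of_length_eq_zero h)))
  have hne2 : w.length ≠ 2 := by
    intro h
    have h₁ := w.adj_getVert_succ (i := 0) (by omega)
    have h₂ := w.adj_getVert_succ (i := 1) (by omega)
    rw [w.getVert_zero] at h₁
    rw [show 1 + 1 = w.length by omega, w.getVert_length] at h₂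
    exact hbc (eq_of_adj_of_adj h₁ h₂)
  omega

end Gamma

theorem exists_ne_zero_add_one_ne_zero_sq_ne {F : Type} [Field F] [Fintype F]
    (hF : 4 < Fintype.card F) (t : F) : ∃ a : F, a ≠ 0 ∧ a + 1 ≠ 0 ∧ a ^ 2 ≠ t := by
  classical
  let S : Finset F := {0, -1} ∪ (Polynomial.nthRoots 2 t).toFinset
  have hS : S.card < Finset.univ.card := calc
    S.card ≤ 2 + 2 := (Finset.card_union_le _ _).trans <| add_le_add Finset.card_le_two <|
      (Multiset.toFinset_card_le _).trans (Polynomial.card_nthRoots 2 t)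
    _ < Finset.univ.card := hF
  obtain ⟨a, -, ha⟩ := Finset.exists_mem_notMem_of_card_lt_card hS
  simp only [S, Finset.mem_union, Finset.mem_insert, Finset.mem_singleton, Multiset.mem_toFinset,
    Polynomial.mem_nthRoots two_pos, not_or] at ha
  exact ⟨a, ha.1.1, fun h => ha.1.2 (eq_neg_of_add_eq_zero_left h), ha.2⟩

theorem exists_ne_zero_mul_add_add_mul_eq {F : Type} [Field F] [Fintype F]
    (hF : 4 < Fintype.card F) (t : F) : ∃ x y : F, x ≠ 0 ∧ y * (x + y + x * y) = t := by
  obtain ⟨a, ha₀, ha₁, hat⟩ := exists_ne_zero_add_one_ne_zero_sq_ne hF t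
  -- with `y = a` the equation reads `a (a + 1) x + a² = t`
  refine ⟨(t - a ^ 2) / (a * (a + 1)), a, div_ne_zero (sub_ne_zero.mpr hat.symm)
    (mul_ne_zero ha₀ ha₁), ?_⟩
  field_simp
  ring

theorem RGraph.exists_walk_length_eq_four {F : Type} [Field F] {b c r s x y : F} (hx : x ≠ 0)
    (h : y * (x + y + x * y) * (b - c) = r - s) :
    ∃ w : (RGraph F).Walk (.inl (0, b, r)) (.inl (0, c, s)), w.length = 4 := by
  set z := r + y * (y - b) * (x + y + x * y)
  have h₁ : (RGraph F).Adj (.inl (0, b, r)) (.inr ((y - b) / x, -b, -r)) := ⟨by ring, by ring⟩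
  have h₂ : (RGraph F).Adj (.inr ((y - b) / x, -b, -r)) (.inl (x, y, z)) :=
    ⟨by field_simp; ring, by field_simp; ring⟩
  have h₃ : (RGraph F).Adj (.inl (x, y, z)) (.inr ((y - c) / x, -c, -s)) :=
    ⟨by field_simp; ring, by field_simp; linear_combination -h⟩
  have h₄ : (RGraph F).Adj (.inr ((y - c) / x, -c, -s)) (.inl (0, c, s)) := ⟨by ring, by ring⟩
  exact ⟨.cons h₁ (.cons h₂ (.cons h₃ (.cons h₄ .nil))), rfl⟩

theorem dist_points_eq_four_general (q p e : ℕ) (hodd : Odd p)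
    (hq : q = p ^ e) (hmod : q % 3 = 1) (F : Type) [Field F] [Fintype F]
    (hcard : Fintype.card F = q) (b c r s : F) (hbc : b ≠ c) :
    (RGraph F).dist (Sum.inl (0, b, r)) (Sum.inl (0, c, s)) = 4 := by
  have hF : 4 < Fintype.card F := by
    have := Fintype.one_lt_card (α := F)
    obtain ⟨k, hk⟩ : Odd q := hq ▸ hodd.pow
    omega
  obtain ⟨x, y, hx, hxy⟩ := exists_ne_zero_mul_add_add_mul_eq hF ((r - s) / (b - c))
  obtain ⟨w, hw⟩ := RGraph.exists_walk_length_eq_four (b := b) (c := c) hx <| by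
    rw [hxy, div_mul_cancel₀ _ (sub_ne_zero.mpr hbc)]
  obtain ⟨w', hw'⟩ := SimpleGraph.Reachable.exists_walk_length_eq_dist ⟨w⟩
  exact le_antisymm (hw ▸ SimpleGraph.dist_le w) (hw' ▸ Gamma.four_le_length_walk hbc w')

/-- Let `q` be a power of an odd prime with `q ≡ 1 (mod 3)` and `F = 𝔽_q`. For all
`b, c, r, s ∈ F` with `b ≠ c`, the points `(0,b,r)` and `(0,c,s)` are at graph distance
exactly 4 in `R`. -/
theorem dist_points_eq_four (q p e : ℕ) (hp : p.Prime) (hodd : Odd p) (he : 1 ≤ e)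
    (hq : q = p ^ e) (hmod : q % 3 = 1) (F : Type) [Field F] [Fintype F]
    (hcard : Fintype.card F = q) (b c r s : F) (hbc : b ≠ c) :
    (RGraph F).dist (Sum.inl (0, b, r)) (Sum.inl (0, c, s)) = 4 :=
  dist_points_eq_four_general q p e hodd hq hmod F hcard b c r s hbc
end

section
/- Let q be a power of an odd prime with q ≡ 1 (mod 3) and F = 𝔽_q. For all x, y, r, s ∈ F with r ≠ s, every walk in the graph R from the line [x,y,r] to the line [x,y,s] has length at least 6, and likewise every walk from the point (x,y,r) to the point (x,y,s) has length at least 6. -/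
/-!
The graph `Γ_F(p₁ℓ₁, g)` is bipartite, so a walk between two distinct vertices on the same side
of length below six has length two or four, and a walk `u — a — v` of length two extends to the
walk `u — a — v — a — v` of length four. In a walk of length four from `[x,y,r]` to `[x,y,s]`
(or from `(x,y,r)` to `(x,y,s)`), the first equation of adjacency forces either the middle vertex
to have first coordinate `x`, or the two other inner vertices to agree in their first coordinates;
in both cases the second equation gives `r = s`.
-/

open SimpleGraph Sum

namespace SimpleGraph.Coloring

variable {V : Type*} {G : SimpleGraph V}

theorem six_le_length_of_forall_not_adj_chain (c : G.Coloring Bool) {u v : V}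
    (hc : c u = c v) (huv : u ≠ v)
    (hchain : ∀ a b d, G.Adj u a → G.Adj a b → G.Adj b d → ¬G.Adj d v)
    (p : G.Walk u v) : 6 ≤ p.length := by
  obtain ⟨k, hk⟩ : Even p.length := (c.even_length_iff_congr p).2 (by rw [hc])
  by_contra! hlt
  have hk3 : k < 3 := by omega
  have adj (i : ℕ) (hi : i < p.length) := p.adj_getVert_succ hi
  have h₀ (hp : 0 < p.length) : G.Adj u (p.getVert 1) := by simpa using adj 0 hp
  have hend (i : ℕ) (hi : p.length ≤ i) : p.getVert i = v := p.getVert_of_length_le hi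
  interval_cases k
  · exact huv (p.eq_of_length_eq_zero hk)
  · have h₁ := adj 1 (by omega)
    rw [hend (1 + 1) (by omega)] at h₁
    exact hchain _ _ _ (h₀ (by omega)) h₁ h₁.symm h₁
  · have h₃ := adj 3 (by omega)
    rw [hend (3 + 1) (by omega)] at h₃
    exact hchain _ _ _ (h₀ (by omega)) (adj 1 (by omega)) (adj 2 (by omega)) h₃

end SimpleGraph.Coloring

namespace Gamma

variable {F : Type} [Field F] {g : F → F → F → F}

def sideColoring : (Gamma F g).Coloring Bool :=
  Coloring.mk Sum.isLeft fun {v w} hvw => by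
    rcases v with _ | _ <;> rcases w with _ | _ <;> simp_all [Gamma, gammaAdj]

theorem eq_of_adj_chain_inr {x y r s : F} {a b c : Vtx F}
    (ha : (Gamma F g).Adj (inr (x, y, r)) a) (hab : (Gamma F g).Adj a b)
    (hbc : (Gamma F g).Adj b c) (hc : (Gamma F g).Adj c (inr (x, y, s))) : r = s := by
  rcases a with ⟨a₁, a₂, a₃⟩ | _ <;> [skip; exact ha.elim]
  rcases b with _ | ⟨b₁, b₂, b₃⟩ <;> [exact hab.elim; skip]
  rcases c with ⟨c₁, c₂, c₃⟩ | _ <;> [skip; exact hc.elim]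
  obtain ⟨ha₁, ha₂⟩ := ha
  obtain ⟨hb₁, hb₂⟩ := hab
  obtain ⟨hc₁, hc₂⟩ := hbc
  obtain ⟨hd₁, hd₂⟩ := hc
  by_cases hb : b₁ = x
  · subst hb
    linear_combination ha₂ - hb₂ + hc₂ - hd₂
  · have h₁ : a₁ = c₁ := by
      have : (a₁ - c₁) * (x - b₁) = 0 := by linear_combination hb₁ - ha₁ + hd₁ - hc₁
      simpa [sub_eq_zero, Ne.symm hb] using this
    subst h₁
    have h₂ : a₂ = c₂ := by linear_combination ha₁ - hd₁
    subst h₂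
    linear_combination ha₂ - hb₂ + hc₂ - hd₂

theorem eq_of_adj_chain_inl {x y r s : F} {a b c : Vtx F}
    (ha : (Gamma F g).Adj (inl (x, y, r)) a) (hab : (Gamma F g).Adj a b)
    (hbc : (Gamma F g).Adj b c) (hc : (Gamma F g).Adj c (inl (x, y, s))) : r = s := by
  rcases a with _ | ⟨a₁, a₂, a₃⟩ <;> [exact ha.elim; skip]
  rcases b with ⟨b₁, b₂, b₃⟩ | _ <;> [skip; exact hab.elim]
  rcases c with _ | ⟨c₁, c₂, c₃⟩ <;> [exact hc.elim; skip]
  obtain ⟨ha₁, ha₂⟩ := ha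
  obtain ⟨hb₁, hb₂⟩ := hab
  obtain ⟨hc₁, hc₂⟩ := hbc
  obtain ⟨hd₁, hd₂⟩ := hc
  by_cases hb : b₁ = x
  · subst hb
    have hy : b₂ = y := by linear_combination hb₁ - ha₁
    subst hy
    linear_combination ha₂ - hb₂ + hc₂ - hd₂
  · have h₁ : a₁ = c₁ := by
      have : (x - b₁) * (a₁ - c₁) = 0 := by linear_combination hb₁ - ha₁ + hd₁ - hc₁
      simpa [sub_eq_zero, Ne.symm hb] using this
    subst h₁
    linear_combination ha₂ - hb₂ + hc₂ - hd₂

end Gamma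

theorem walks_length_ge_six_general (F : Type) [Field F] (x y r s : F) (hrs : r ≠ s) :
    (∀ w : (RGraph F).Walk (Sum.inr (x, y, r)) (Sum.inr (x, y, s)), 6 ≤ w.length) ∧
      (∀ w : (RGraph F).Walk (Sum.inl (x, y, r)) (Sum.inl (x, y, s)), 6 ≤ w.length) :=
  ⟨Gamma.sideColoring.six_le_length_of_forall_not_adj_chain rfl (by simpa using hrs)
     fun _ _ _ ha hab hbc hc => hrs (Gamma.eq_of_adj_chain_inr ha hab hbc hc),
   Gamma.sideColoring.six_le_length_of_forall_not_adj_chain rfl (by simpa using hrs)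
     fun _ _ _ ha hab hbc hc => hrs (Gamma.eq_of_adj_chain_inl ha hab hbc hc)⟩

/-- Let `q` be a power of an odd prime with `q ≡ 1 (mod 3)` and `F = 𝔽_q`. For all
`x, y, r, s ∈ F` with `r ≠ s`, every walk in `R` from the line `[x,y,r]` to the line `[x,y,s]`
has length at least 6, and likewise every walk from the point `(x,y,r)` to the point `(x,y,s)`
has length at least 6. -/
theorem walks_length_ge_six (q p e : ℕ) (hp : p.Prime) (hodd : Odd p) (he : 1 ≤ e)
    (hq : q = p ^ e) (hmod : q % 3 = 1) (F : Type) [Field F] [Fintype F]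
    (hcard : Fintype.card F = q) (x y r s : F) (hrs : r ≠ s) :
    (∀ w : (RGraph F).Walk (Sum.inr (x, y, r)) (Sum.inr (x, y, s)), 6 ≤ w.length) ∧
      (∀ w : (RGraph F).Walk (Sum.inl (x, y, r)) (Sum.inl (x, y, s)), 6 ≤ w.length) :=
  walks_length_ge_six_general F x y r s hrs
end
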